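/- For every partition λ, (σ∘π)²(λ) = λ; in particular, if λ is self-conjugate then (σ∘π)(λ) = λ. -/

import Mathlib

/-- A partition represented as a weakly decreasing list of positive integers. -/
def IsPartition (l : List ℕ) : Prop :=
  l.Pairwise (· ≥ ·) ∧ ∀ x ∈ l, 0 < x

/-- Sequentially congruent: `λ_i ≡ λ_{i+1} (mod i)` for `1 ≤ i ≤ r-1` and `λ_r ≡ 0 (mod r)`
(0-indexed, with the convention `λ_{r+1} = 0`). -/
def SeqCongruent (l : List ℕ) : Prop :=
  ∀ j < l.length, l.getD j 0 ≡ l.getD (j+1) 0 [MOD j+1]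

/-- The map `π`: `π(λ)_i = i·λ_i + Σ_{j=i+1}^r λ_j` (1-indexed). -/
def piMap (l : List ℕ) : List ℕ :=
  (List.range l.length).map (fun j => (j+1) * l.getD j 0 + (l.drop (j+1)).sum)

/-- The map `σ`: the partition in which `i` occurs with frequency `(φ_i - φ_{i+1})/i`. -/
def sigmaMap (l : List ℕ) : List ℕ :=
  ((List.range l.length).reverse).flatMap
    (fun j => List.replicate ((l.getD j 0 - l.getD (j+1) 0) / (j+1)) (j+1))

/-- The conjugate partition: its `i`-th part is the number of parts of `l` that are `≥ i`. -/
def conj (l : List ℕ) : List ℕ :=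
  (List.range (l.getD 0 0)).map (fun i => l.countP (fun x => decide (i + 1 ≤ x)))

/-- Frequency congruent: each part `i` occurs with frequency divisible by `i`. -/
def FreqCongruent (l : List ℕ) : Prop :=
  ∀ i, 0 < i → i ∣ l.count i

/-!
On weakly decreasing lists `σ ∘ π` is conjugation. Consecutive parts of `π(λ)` differ by
`π(λ)_i - π(λ)_{i+1} = i (λ_i - λ_{i+1})`, so `σ(π(λ))` contains the part `i` exactly
`λ_i - λ_{i+1}` times, which is also the multiplicity of `i` in the conjugate `λ'`; two weakly
decreasing lists with the same multiplicities are equal. Hence `(σ ∘ π)² λ = λ'' = λ`.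
-/

namespace List

theorem getD_le_getD_of_pairwise_ge {l : List ℕ} (hl : l.Pairwise (· ≥ ·)) {i j : ℕ}
    (hij : i ≤ j) : l.getD j 0 ≤ l.getD i 0 := by
  by_cases hj : j < l.length
  · rcases hij.lt_or_eq with h | rfl
    · simp only [getD_eq_getElem _ _ hj, getD_eq_getElem _ _ (h.trans hj)]
      exact pairwise_iff_getElem.mp hl i j _ hj h
    · rfl
  · rw [getD_eq_default _ _ (not_lt.mp hj)]
    exact Nat.zero_le _

theorem lt_countP_le_iff_le_getD {l : List ℕ} (hl : l.Pairwise (· ≥ ·)) {m : ℕ} (hm : 0 < m)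
    (i : ℕ) : i < l.countP (m ≤ ·) ↔ m ≤ l.getD i 0 := by
  induction l generalizing i with
  | nil => simp; omega
  | cons a t ih =>
    obtain ⟨ha, ht⟩ := pairwise_cons.mp hl
    by_cases hma : m ≤ a
    · cases i <;> simp [hma, ih ht]
    · have ht0 : t.countP (m ≤ ·) = 0 :=
        countP_eq_zero.mpr fun x hx h => hma ((of_decide_eq_true h).trans (ha x hx))
      cases i with
      | zero => simp [hma, ht0]
      | succ i => simpa [hma, ht0, getD_cons_succ] using ih ht i

theorem countP_range_mem_Ico (lo hi n : ℕ) :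
    (range n).countP (fun i => lo ≤ i ∧ i < hi) = min hi n - min lo n := by
  induction n with
  | zero => simp
  | succ n ih =>
    rw [range_succ, countP_append, ih, countP_singleton]
    split_ifs with h <;>
      simp only [Bool.decide_and, Bool.and_eq_true, decide_eq_true_eq, not_and, not_lt] at h <;> omega

theorem sum_drop_eq_getD_add (l : List ℕ) (j : ℕ) :
    (l.drop j).sum = l.getD j 0 + (l.drop (j + 1)).sum := by
  rcases lt_or_ge j l.length with h | h
  · rw [drop_eq_getElem_cons h, sum_cons, getD_eq_getElem _ _ h]
  · simp [drop_eq_nil_of_le, h, show l.length ≤ j + 1 by omega]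

theorem count_succ_flatMap_range_replicate (d : ℕ → ℕ) (n k : ℕ) :
    ((range n).reverse.flatMap fun j => replicate (d j) (j + 1)).count (k + 1) =
      if k < n then d k else 0 := by
  rw [count_flatMap, sum_map_eq_nsmul_single k, count_reverse, count_range]
  · split_ifs <;> simp
  · intro j hjk _
    simp [count_replicate, hjk]

theorem pairwise_ge_flatMap_range_replicate (d : ℕ → ℕ) (n : ℕ) :
    ((range n).reverse.flatMap fun j => replicate (d j) (j + 1)).Pairwise (· ≥ ·) := by
  refine pairwise_flatMap.mpr ⟨fun j _ => pairwise_replicate.mpr (Or.inr le_rfl), ?_⟩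
  refine pairwise_reverse.mpr (pairwise_lt_range.imp fun hij x hx y hy => ?_)
  rw [eq_of_mem_replicate hx, eq_of_mem_replicate hy]
  omega

end List

open List

theorem piMap_getD (l : List ℕ) (j : ℕ) :
    (piMap l).getD j 0 = (j + 1) * l.getD j 0 + (l.drop (j + 1)).sum := by
  rcases lt_or_ge j l.length with h | h
  · rw [getD_eq_getElem _ _ (by simpa [piMap] using h)]
    simp [piMap]
  · rw [getD_eq_default _ _ (by simpa [piMap] using h), getD_eq_default _ _ h,
      drop_eq_nil_of_le (by omega)]
    simp

theorem piMap_getD_sub_getD_succ {l : List ℕ} (hl : l.Pairwise (· ≥ ·)) (j : ℕ) :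
    (piMap l).getD j 0 - (piMap l).getD (j + 1) 0 = (j + 1) * (l.getD j 0 - l.getD (j + 1) 0) := by
  have hle : l.getD (j + 1) 0 ≤ l.getD j 0 := getD_le_getD_of_pairwise_ge hl j.le_succ
  have : (j + 1) * l.getD (j + 1) 0 ≤ (j + 1) * l.getD j 0 := Nat.mul_le_mul_left _ hle
  rw [piMap_getD, piMap_getD, sum_drop_eq_getD_add _ (j + 1), Nat.mul_sub, add_one_mul (j + 1)]
  omega

theorem sigmaMap_piMap_eq_flatMap {l : List ℕ} (hl : l.Pairwise (· ≥ ·)) :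
    sigmaMap (piMap l) = (range l.length).reverse.flatMap
      fun j => replicate (l.getD j 0 - l.getD (j + 1) 0) (j + 1) := by
  unfold sigmaMap
  rw [show (piMap l).length = l.length by simp [piMap]]
  congr! 3 with j
  rw [piMap_getD_sub_getD_succ hl, Nat.mul_div_cancel_left _ j.add_one_pos]

theorem length_conj (l : List ℕ) : (conj l).length = l.getD 0 0 := by
  simp [conj]

theorem getElem_conj (l : List ℕ) {i : ℕ} (hi : i < (conj l).length) :
    (conj l)[i] = l.countP (i + 1 ≤ ·) := by
  simp [conj]

theorem pairwise_ge_conj (l : List ℕ) : (conj l).Pairwise (· ≥ ·) := by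
  refine pairwise_iff_getElem.mpr fun i j hi hj hij => ?_
  rw [getElem_conj, getElem_conj]
  refine countP_mono_left fun x _ hx => ?_
  simp only [decide_eq_true_eq] at hx ⊢
  omega

theorem zero_notMem_conj (l : List ℕ) : 0 ∉ conj l := by
  intro h
  obtain ⟨i, hi, hi0⟩ := mem_map.mp h
  rcases l with _ | ⟨a, t⟩
  · simp at hi
  · have hia : i + 1 ≤ a := mem_range.mp hi
    simp only [countP_cons, decide_eq_true hia, if_true] at hi0
    omega

theorem getD_conj {l : List ℕ} (hl : l.Pairwise (· ≥ ·)) (i : ℕ) :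
    (conj l).getD i 0 = l.countP (i + 1 ≤ ·) := by
  rcases lt_or_ge i (conj l).length with hi | hi
  · rw [getD_eq_getElem _ _ hi, getElem_conj]
  · have := (lt_countP_le_iff_le_getD hl i.add_one_pos 0).not
    rw [getD_eq_default _ _ hi]
    rw [length_conj] at hi
    omega

theorem count_succ_conj {l : List ℕ} (hl : l.Pairwise (· ≥ ·)) (k : ℕ) :
    (conj l).count (k + 1) = l.getD k 0 - l.getD (k + 1) 0 := by
  have hcol (i : ℕ) :
      l.countP (i + 1 ≤ ·) = k + 1 ↔ l.getD (k + 1) 0 ≤ i ∧ i < l.getD k 0 := by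
    have := lt_countP_le_iff_le_getD hl i.add_one_pos k
    have := lt_countP_le_iff_le_getD hl i.add_one_pos (k + 1)
    omega
  rw [conj, count_eq_countP, countP_map,
    countP_congr (q := fun i => l.getD (k + 1) 0 ≤ i ∧ i < l.getD k 0) fun i _ => by
      simpa only [Function.comp_apply, beq_iff_eq, decide_eq_true_eq] using hcol i,
    countP_range_mem_Ico]
  have := getD_le_getD_of_pairwise_ge hl k.le_succ
  have := getD_le_getD_of_pairwise_ge hl k.zero_le
  omega

theorem sigmaMap_piMap {l : List ℕ} (hl : l.Pairwise (· ≥ ·)) : sigmaMap (piMap l) = conj l := by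
  rw [sigmaMap_piMap_eq_flatMap hl]
  refine Perm.eq_of_pairwise' (pairwise_ge_flatMap_range_replicate _ _) (pairwise_ge_conj l)
    (perm_iff_count.mpr fun v => ?_)
  rcases v with _ | k
  · rw [count_eq_zero.mpr (zero_notMem_conj l), count_eq_zero]
    simp
  · rw [count_succ_flatMap_range_replicate, count_succ_conj hl]
    split_ifs with hk
    · rfl
    · rw [getD_eq_default _ _ (not_lt.mp hk), getD_eq_default _ _ (by omega)]

theorem conj_conj {l : List ℕ} (hl : IsPartition l) : conj (conj l) = l := by
  have hlen : (conj (conj l)).length = l.length := by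
    rw [length_conj, getD_conj hl.1, countP_eq_length]
    exact fun x hx => decide_eq_true (hl.2 x hx)
  refine ext_getElem hlen fun i hi hil => ?_
  have hcol (j : ℕ) : i + 1 ≤ l.countP (j + 1 ≤ ·) ↔ j < l.getD i 0 :=
    lt_countP_le_iff_le_getD hl.1 j.add_one_pos i
  rw [getElem_conj, conj, countP_map,
    countP_congr (q := fun j => 0 ≤ j ∧ j < l.getD i 0) fun j _ => by
      simpa only [Function.comp_apply, decide_eq_true_eq, zero_le, true_and] using hcol j,
    countP_range_mem_Ico, ← getD_eq_getElem l 0 hil]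
  have := getD_le_getD_of_pairwise_ge hl.1 i.zero_le
  omega

theorem stmt9 (l : List ℕ) (hl : IsPartition l) :
    sigmaMap (piMap (sigmaMap (piMap l))) = l ∧
      (conj l = l → sigmaMap (piMap l) = l) := by
  rw [sigmaMap_piMap hl.1, sigmaMap_piMap (pairwise_ge_conj l), conj_conj hl]
  exact ⟨rfl, id⟩
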